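/- Let C and D be small categories and let L : Psh(C) ⥤ Psh(D) be a left adjoint functor. Then there exist a small category B and functors F : C ⥤ B and G : D ⥤ B such that L is naturally isomorphic to the composite Σ_F ⋙ Δ_G : Psh(C) ⥤ Psh(B) ⥤ Psh(D). (The category B may be taken to be the collage of the bimodule corresponding to L, with F and G the collage inclusions.) -/

import Mathlib

/-!
A colimit-preserving functor out of a presheaf category is determined by its values on
representables. Both `L` and `Σ_F ⋙ Δ_G` preserve colimits, and on the representable at `c` the
first gives the presheaf `L (yoneda c)` on `D`, while the second gives the restriction along
`G` of the representable at `F c`. In the collage of the bimodule `c ↦ L (yoneda c)` these agree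
by construction: a morphism from `G d` to `F c` is precisely an element of `L (yoneda c)` at `d`.
-/

open CategoryTheory Limits

universe u

namespace CategoryTheory.Presheaf

variable {C : Type u} [SmallCategory C]

noncomputable def isoOfPreservesColimitsOfYonedaIso {E : Type*} [Category.{u} E]
    {L L' : (Cᵒᵖ ⥤ Type u) ⥤ E} [PreservesColimitsOfSize.{u, u} L]
    [PreservesColimitsOfSize.{u, u} L'] (e : yoneda ⋙ L ≅ yoneda ⋙ L') : L ≅ L' :=
  uniqueExtensionAlongULiftYoneda L (Iso.refl (uliftYoneda.{u} ⋙ L)) ≪≫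
    (uniqueExtensionAlongULiftYoneda L' (Functor.isoWhiskerRight uliftYonedaIsoYoneda L ≪≫ e ≪≫
      Functor.isoWhiskerRight uliftYonedaIsoYoneda.symm L')).symm

noncomputable def compYonedaIsoYonedaCompLan {B : Type u} [SmallCategory B] (F : C ⥤ B) :
    F ⋙ yoneda ≅ yoneda ⋙ F.op.lan :=
  Functor.isoWhiskerLeft F uliftYonedaIsoYoneda.{u}.symm ≪≫
    compULiftYonedaIsoULiftYonedaCompLan F ≪≫ Functor.isoWhiskerRight uliftYonedaIsoYoneda F.op.lan

end CategoryTheory.Presheaf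

instance {C D H : Type*} [Category C] [Category D] [Category H] (L : C ⥤ D)
    [∀ F : C ⥤ H, L.HasLeftKanExtension F] : (L.lan : (C ⥤ H) ⥤ _).IsLeftAdjoint :=
  (L.lanAdjunction H).isLeftAdjoint

namespace CategoryTheory

variable {C D : Type u} [SmallCategory C] [SmallCategory D]

def Collage (_ : C ⥤ Dᵒᵖ ⥤ Type u) : Type u := C ⊕ D

namespace Collage

variable (M : C ⥤ Dᵒᵖ ⥤ Type u)

def Hom : Collage M → Collage M → Type u
  | .inl c, .inl c' => c ⟶ c'
  | .inl _, .inr _ => PEmpty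
  | .inr d, .inl c => (M.obj c).obj (.op d)
  | .inr d, .inr d' => d ⟶ d'

def id : ∀ X : Collage M, Hom M X X
  | .inl c => 𝟙 c
  | .inr d => 𝟙 d

def comp : ∀ {X Y Z : Collage M}, Hom M X Y → Hom M Y Z → Hom M X Z
  | .inl _, .inl _, .inl _, f, g => f ≫ g
  | .inl _, .inl _, .inr _, _, g => g.elim
  | .inl _, .inr _, _, f, _ => f.elim
  | .inr _, .inl _, .inl _, m, g => (M.map g).app _ m
  | .inr _, .inl _, .inr _, _, g => g.elim
  | .inr _, .inr _, .inl _, f, m => (M.obj _).map f.op m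
  | .inr _, .inr _, .inr _, f, g => f ≫ g

instance : SmallCategory (Collage M) where
  Hom := Hom M
  id := id M
  comp := comp M
  id_comp := by
    rintro (c|d) (c'|d') f
    · exact Category.id_comp (X := c) f
    · exact f.elim
    · exact (M.obj c').map_id_apply (X := Opposite.op d) f
    · exact Category.id_comp (X := d) f
  comp_id := by
    rintro (c|d) (c'|d') f
    · exact Category.comp_id (X := c) f
    · exact f.elim
    · exact ConcreteCategory.congr_hom (congr_app (M.map_id c') _) f
    · exact Category.comp_id (X := d) f
  assoc := by
    rintro (w|w) (x|x) (y|y) (z|z) f g h <;>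
      first | exact f.elim | exact g.elim | exact h.elim | skip
    · exact Category.assoc (W := w) f g h
    · exact (ConcreteCategory.congr_hom (congr_app (M.map_comp g h) _) f).symm
    · exact NatTrans.naturality_apply (M.map h) f.op g
    · exact (M.obj z).map_comp_apply g.op f.op (X := Opposite.op y) h
    · exact Category.assoc (W := w) f g h

def inl : C ⥤ Collage M where
  obj := Sum.inl
  map f := f

def inr : D ⥤ Collage M where
  obj := Sum.inr
  map f := f

def inlCompYonedaRestrictIso :
    (inl M ⋙ yoneda) ⋙ (Functor.whiskeringLeft _ _ _).obj (inr M).op ≅ M :=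
  NatIso.ofComponents (fun c => NatIso.ofComponents (fun d => Iso.refl _))

end Collage

end CategoryTheory

/-- Every left adjoint functor `L : Psh(C) ⥤ Psh(D)` between presheaf categories on small
categories factors, up to natural isomorphism, as a left pushforward followed by a
pullback: there exist a small category `B` (the collage) and functors `F : C ⥤ B`,
`G : D ⥤ B` (the collage inclusions) with `L ≅ Σ_F ⋙ Δ_G`. -/
theorem leftAdjoint_iso_sigma_comp_delta {C D : Type u} [SmallCategory C] [SmallCategory D]
    (L : (Cᵒᵖ ⥤ Type u) ⥤ (Dᵒᵖ ⥤ Type u)) [L.IsLeftAdjoint] :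
    ∃ (B : Cat.{u, u}) (F : C ⥤ B) (G : D ⥤ B),
      Nonempty (L ≅ F.op.lan ⋙ (Functor.whiskeringLeft Dᵒᵖ Bᵒᵖ (Type u)).obj G.op) := by
  let M := yoneda ⋙ L
  refine ⟨Cat.of (Collage M), Collage.inl M, Collage.inr M,
    ⟨Presheaf.isoOfPreservesColimitsOfYonedaIso ?_⟩⟩
  exact (Collage.inlCompYonedaRestrictIso M).symm ≪≫
    Functor.isoWhiskerRight (Presheaf.compYonedaIsoYonedaCompLan _) _ ≪≫ Functor.associator _ _ _
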